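/- arXiv:1612.08146 — 2 statements merged into one kernel-verified Lean document; each statement's English description precedes it below -/
import Mathlib

section
/- The Motzkin number M_n is divisible by 23 if and only if n has one of the forms (23i+21)·23^{2j−1} − 2, (23i+1)·23^{2j} − 2, (23i+2)·23^{2j−1} − 1, or (23i+22)·23^{2j} − 1, where i, j are natural numbers with j ≥ 1. -/
/-!
Write `T(n, d)` for the coefficient of `x^(n+d)` in `(1 + x + x²)^n`. Splitting
`C(2k, k) = Cat_k + C(2k, k+1)` gives `M_n = T(n, 0) - T(n, 2)`. Over `𝔽₂₃`,
`(1 + x + x²)^(23n+r) = (1 + x²³ + x⁴⁶)^n (1 + x + x²)^r` and the second factor has degree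
`2r ≤ 44`, so `T(23n+r, d)` is `T(n, 0) T(r, d)` when `r + d < 23` and a combination of `T(n, 0)`
and `T(n, 1)` otherwise. Hence `T(n, 0) ≠ 0` mod 23, `23 ∣ M_n` forces `n ≡ 21` or `22 (mod 23)`,
and then amounts to `T(q, 1) = ∓T(q, 0)` with `q = ⌊n/23⌋`. The ratio `T(q, 1) / T(q, 0)` is that
of the last base-23 digit of `q` other than `22`, transformed by the involution `k ↦ -k - 1` once
for every trailing digit `22`; for `q + 1` this is a condition on its last nonzero digit and the
parity of that digit's position.
-/

open Finset

def motzkin (n : ℕ) : ℕ := ∑ k ∈ Finset.range (n + 1), n.choose (2 * k) * catalan k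

open Polynomial

noncomputable def trinomialCoeff (R : Type*) [Semiring R] (n d : ℕ) : R :=
  ((1 + X + X ^ 2 : R[X]) ^ n).coeff (n + d)

theorem catalan_add_choose_succ (k : ℕ) :
    catalan k + (2 * k).choose (k + 1) = (2 * k).choose k := by
  apply Nat.eq_of_mul_eq_mul_left k.succ_pos
  have h := Nat.choose_succ_right_eq (2 * k) k
  rw [show 2 * k - k = k by omega] at h
  rw [mul_add, succ_mul_catalan_eq_centralBinom, Nat.centralBinom_eq_two_mul_choose]
  linarith

theorem trinomialCoeff_nat_eq_sum (n d : ℕ) :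
    trinomialCoeff ℕ n d = ∑ k ∈ range (n + 1), n.choose (2 * k + d) * (2 * k + d).choose k := by
  have hT : (1 + X + X ^ 2 : ℕ[X]) = 1 + X * (1 + X) := by ring
  rw [trinomialCoeff, hT, add_pow, finsetSum_coeff]
  refine sum_congr rfl fun k hk => ?_
  have hkn : k ≤ n := Nat.lt_succ_iff.mp (mem_range.mp hk)
  rw [Nat.choose_mul (by omega), show 2 * k + d - k = k + d by omega, one_pow, one_mul, mul_pow,
    ← Nat.cast_id (n.choose k), ← C_eq_natCast, coeff_mul_C, coeff_X_pow_mul',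
    coeff_one_add_X_pow, if_pos (by omega), show n + d - (n - k) = k + d by omega, Nat.cast_id,
    Nat.cast_id, mul_comm]

theorem motzkin_add_trinomialCoeff_two (n : ℕ) :
    motzkin n + trinomialCoeff ℕ n 2 = trinomialCoeff ℕ n 0 := by
  have hshift : ∑ k ∈ range (n + 1), n.choose (2 * k) * (2 * k).choose (k + 1)
      = ∑ k ∈ range (n + 1), n.choose (2 * k + 2) * (2 * k + 2).choose k := by
    rw [sum_range_succ', sum_range_succ,
      Nat.choose_eq_zero_of_lt (n := n) (k := 2 * n + 2) (by omega)]
    simp only [Nat.choose_zero_succ, mul_zero, zero_mul, add_zero]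
    refine sum_congr rfl fun k _ => ?_
    rw [show 2 * (k + 1) = k + 2 + k by ring, Nat.choose_symm_add,
      show k + 2 + k = 2 * k + 2 by ring]
  simp only [motzkin, trinomialCoeff_nat_eq_sum, add_zero, ← hshift, ← sum_add_distrib,
    ← mul_add, catalan_add_choose_succ]

theorem natCast_trinomialCoeff (R : Type*) [Semiring R] (n d : ℕ) :
    (trinomialCoeff ℕ n d : R) = trinomialCoeff R n d := by
  rw [trinomialCoeff, trinomialCoeff, ← eq_natCast (Nat.castRingHom R), ← coeff_map]
  simp

theorem dvd_motzkin_iff (p n : ℕ) :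
    p ∣ motzkin n ↔ trinomialCoeff (ZMod p) n 0 = trinomialCoeff (ZMod p) n 2 := by
  have h := congrArg (Nat.cast : ℕ → ZMod p) (motzkin_add_trinomialCoeff_two n)
  rw [Nat.cast_add, natCast_trinomialCoeff, natCast_trinomialCoeff] at h
  rw [← ZMod.natCast_eq_zero_iff, ← h, add_eq_right]

-- Rows of the trinomial triangle as lists, so that `decide` can evaluate small coefficients.
def trinomialRow : ℕ → List ℕ
  | 0 => [1]
  | n + 1 =>
    let l := trinomialRow n
    (List.range (l.length + 2)).map fun j =>
      l.getD j 0 + (0 :: l).getD j 0 + (0 :: 0 :: l).getD j 0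

theorem coeff_X_mul_eq_getD_cons {R : Type*} [Semiring R] {q : R[X]} {l : List ℕ}
    (h : ∀ j, q.coeff j = (l.getD j 0 : R)) (j : ℕ) :
    (X * q).coeff j = ((0 :: l).getD j 0 : R) := by
  cases j <;> simp [h]

theorem coeff_trinomial_pow_eq_getD (R : Type*) [Semiring R] (n j : ℕ) :
    ((1 + X + X ^ 2 : R[X]) ^ n).coeff j = ((trinomialRow n).getD j 0 : R) := by
  induction n generalizing j with
  | zero => cases j <;> simp [trinomialRow, coeff_one]
  | succ n ih =>
    have h₁ := coeff_X_mul_eq_getD_cons ih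
    have h₂ := coeff_X_mul_eq_getD_cons h₁
    have hT : (1 + X + X ^ 2 : R[X]) ^ (n + 1)
        = (1 + X + X ^ 2) ^ n + X * (1 + X + X ^ 2) ^ n + X * (X * (1 + X + X ^ 2) ^ n) := by
      rw [pow_succ', add_mul, add_mul, one_mul, ← mul_assoc, ← sq]
    rw [hT, coeff_add, coeff_add, ih, h₁, h₂, trinomialRow]
    by_cases hj : j < (trinomialRow n).length + 2
    · simp [List.getD_eq_getElem?_getD, List.getElem?_range hj]
    · rw [List.getD_eq_default _ _ (by omega), List.getD_eq_default _ _ (by simp; omega),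
        List.getD_eq_default _ _ (by simp; omega), List.getD_eq_default _ _ (by simpa using hj)]
      simp

theorem trinomialCoeff_eq_getD (R : Type*) [Semiring R] (n d : ℕ) :
    trinomialCoeff R n d = ((trinomialRow n).getD (n + d) 0 : R) :=
  coeff_trinomial_pow_eq_getD R n (n + d)

section Expand

variable {R : Type*} [CommSemiring R] {p s : ℕ} (f : R[X]) {g : R[X]}

theorem coeff_expand_monomial_mul (v : ℕ) (a : R) (n : ℕ) :
    (expand R p (monomial v a) * g).coeff n
      = if v * p ≤ n then a * g.coeff (n - v * p) else 0 := by
  rw [expand_monomial, ← C_mul_X_pow_eq_monomial, mul_assoc, coeff_C_mul, coeff_X_pow_mul']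
  split_ifs <;> simp

theorem coeff_expand_mul_of_natDegree_lt (hs : s < p) (hg : g.natDegree < s + p) (u : ℕ) :
    (expand R p f * g).coeff (p * u + s) = f.coeff u * g.coeff s := by
  induction f using Polynomial.induction_on' with
  | add f₁ f₂ h₁ h₂ => simp only [map_add, add_mul, coeff_add, h₁, h₂]
  | monomial v a =>
    rw [coeff_expand_monomial_mul, coeff_monomial, mul_comm p]
    rcases lt_trichotomy v u with h | rfl | h
    · have : v * p + p ≤ u * p := by nlinarith
      rw [coeff_eq_zero_of_natDegree_lt (by omega), if_neg h.ne]
      simp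
    · simp
    · have : u * p + p ≤ v * p := by nlinarith
      rw [if_neg (by omega), if_neg h.ne', zero_mul]

theorem coeff_expand_mul_succ_of_natDegree_lt (hs : s < p) (hg : g.natDegree < s + 2 * p)
    (u : ℕ) : (expand R p f * g).coeff (p * (u + 1) + s)
      = f.coeff (u + 1) * g.coeff s + f.coeff u * g.coeff (s + p) := by
  induction f using Polynomial.induction_on' with
  | add f₁ f₂ h₁ h₂ => simp only [map_add, add_mul, coeff_add, h₁, h₂]; ring
  | monomial v a =>
    rw [coeff_expand_monomial_mul, coeff_monomial, coeff_monomial, mul_comm p, add_one_mul]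
    rcases lt_trichotomy v u with h | rfl | h
    · have : v * p + p ≤ u * p := by nlinarith
      rw [coeff_eq_zero_of_natDegree_lt (by omega), if_neg (show v ≠ u + 1 by omega),
        if_neg h.ne]
      simp
    · simp [show v * p + p + s - v * p = s + p by omega, show v * p ≤ v * p + p + s by omega]
    · rcases (Nat.succ_le_of_lt h).eq_or_lt with rfl | h'
      · simp [add_one_mul]
      · have : u * p + p + p ≤ v * p := by nlinarith
        rw [if_neg (by omega), if_neg h'.ne', if_neg (by omega)]
        simp

end Expand

theorem natDegree_trinomial_pow_le {R : Type*} [Semiring R] (r : ℕ) :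
    ((1 + X + X ^ 2 : R[X]) ^ r).natDegree ≤ 2 * r := by
  rw [mul_comm]
  exact natDegree_pow_le_of_le r (by compute_degree)

section Frobenius

variable {p : ℕ} [Fact p.Prime] {n r d : ℕ}

theorem trinomial_pow_mul_add (n r : ℕ) :
    (1 + X + X ^ 2 : (ZMod p)[X]) ^ (p * n + r)
      = expand (ZMod p) p ((1 + X + X ^ 2) ^ n) * (1 + X + X ^ 2) ^ r := by
  rw [pow_add, pow_mul', ZMod.expand_card]

theorem trinomialCoeff_mul_add_of_add_lt (h : r + d < p) :
    trinomialCoeff (ZMod p) (p * n + r) d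
      = trinomialCoeff (ZMod p) n 0 * trinomialCoeff (ZMod p) r d := by
  have := natDegree_trinomial_pow_le (R := ZMod p) r
  rw [trinomialCoeff, trinomial_pow_mul_add, Nat.add_assoc,
    coeff_expand_mul_of_natDegree_lt _ h (by omega)]
  simp [trinomialCoeff]

theorem trinomialCoeff_mul_add_of_le_add (hr : r < p) (h₁ : p ≤ r + d) (h₂ : r + d < 2 * p) :
    trinomialCoeff (ZMod p) (p * n + r) d
      = trinomialCoeff (ZMod p) n 1 * ((1 + X + X ^ 2) ^ r).coeff (r + d - p)
        + trinomialCoeff (ZMod p) n 0 * trinomialCoeff (ZMod p) r d := by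
  have := natDegree_trinomial_pow_le (R := ZMod p) r
  rw [trinomialCoeff, trinomial_pow_mul_add, show p * n + r + d = p * (n + 1) + (r + d - p) by
    rw [mul_add_one]; omega, coeff_expand_mul_succ_of_natDegree_lt _ (by omega) (by omega),
    Nat.sub_add_cancel h₁]
  simp [trinomialCoeff]

end Frobenius

-- For `0 < a, b < 23`: the last nonzero base-23 digit of `m` is `a` if it sits at an even
-- position and `b` if at an odd one.
def LastNonzeroDigit (a b m : ℕ) : Prop :=
  ∃ i e : ℕ, m = (23 * i + a) * 23 ^ (2 * e) ∨ m = (23 * i + b) * 23 ^ (2 * e + 1)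

theorem lastNonzeroDigit_iff_of_not_dvd {a b m : ℕ} (ha : a < 23) (hm : ¬ 23 ∣ m) :
    LastNonzeroDigit a b m ↔ m % 23 = a := by
  constructor
  · rintro ⟨i, e, rfl | rfl⟩
    · rcases e.eq_zero_or_pos with rfl | he
      · omega
      · exact absurd (Dvd.dvd.mul_left (dvd_pow_self 23 (by omega)) _) hm
    · exact absurd (Dvd.dvd.mul_left (dvd_pow_self 23 (by omega)) _) hm
  · intro h
    exact ⟨m / 23, 0, Or.inl (by omega)⟩

theorem lastNonzeroDigit_twentythree_mul {a b : ℕ} (ha : ¬ 23 ∣ a) (k : ℕ) :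
    LastNonzeroDigit a b (23 * k) ↔ LastNonzeroDigit b a k := by
  constructor
  · rintro ⟨i, e, h | h⟩
    · rcases e with _ | e
      · omega
      · refine ⟨i, e, Or.inr (Nat.eq_of_mul_eq_mul_left (by norm_num : 0 < 23) ?_)⟩
        rw [h, show 2 * (e + 1) = 2 * e + 1 + 1 by ring, pow_succ]
        ring
    · refine ⟨i, e, Or.inl (Nat.eq_of_mul_eq_mul_left (by norm_num : 0 < 23) ?_)⟩
      rw [h, pow_succ]
      ring
  · rintro ⟨i, e, rfl | rfl⟩
    · exact ⟨i, e, Or.inr (by ring)⟩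
    · exact ⟨i, e + 1, Or.inl (by ring)⟩

theorem exists_add_eq_mul_pow_iff {s t : ℕ} (hs : 0 < s) (hst : s + t = 23) (a b n : ℕ) :
    (∃ i j : ℕ, 1 ≤ j ∧
        (n + s = (23 * i + a) * 23 ^ (2 * j - 1) ∨ n + s = (23 * i + b) * 23 ^ (2 * j))) ↔
      n % 23 = t ∧ LastNonzeroDigit a b (n / 23 + 1) := by
  constructor
  · rintro ⟨i, j, hj, h⟩
    obtain ⟨e, rfl⟩ : ∃ e, j = e + 1 := ⟨j - 1, by omega⟩
    obtain ⟨K, hK, hn⟩ : ∃ K, LastNonzeroDigit a b K ∧ n + s = 23 * K := by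
      rcases h with h | h
      · exact ⟨_, ⟨i, e, Or.inl rfl⟩, by rw [h, show 2 * (e + 1) - 1 = 2 * e + 1 by omega]; ring⟩
      · exact ⟨_, ⟨i, e, Or.inr rfl⟩, by rw [h]; ring⟩
    obtain rfl : K = n / 23 + 1 := by omega
    exact ⟨by omega, hK⟩
  · rintro ⟨hn, i, e, h | h⟩
    · refine ⟨i, e + 1, by omega, Or.inl ?_⟩
      rw [show 2 * (e + 1) - 1 = 2 * e + 1 by omega, pow_succ, ← mul_assoc, ← h]
      omega
    · refine ⟨i, e + 1, by omega, Or.inr ?_⟩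
      rw [show 2 * (e + 1) = 2 * e + 1 + 1 by ring, pow_succ, ← mul_assoc, ← h]
      omega

section Modulo23

instance fact_prime_twentyThree : Fact (Nat.Prime 23) := ⟨by norm_num⟩

local notation "τ" => trinomialCoeff (ZMod 23)

theorem trinomialCoeff_zero_ne_zero (n : ℕ) : τ n 0 ≠ 0 := by
  induction n using Nat.strong_induction_on with
  | _ n ih =>
  rcases n.eq_zero_or_pos with rfl | hn
  · simp [trinomialCoeff]
  · have hdigit : ∀ r < 23, τ r 0 ≠ 0 := by simp only [trinomialCoeff_eq_getD]; decide
    rw [← Nat.div_add_mod n 23, trinomialCoeff_mul_add_of_add_lt (by omega)]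
    exact mul_ne_zero (ih _ (Nat.div_lt_self hn (by norm_num)))
      (hdigit _ (Nat.mod_lt _ (by norm_num)))

-- Digits are shifted by one to match `q + 1` in `LastNonzeroDigit`.
def IsRatioDigit (k : ZMod 23) (a : ℕ) : Prop :=
  0 < a ∧ a < 23 ∧ ∀ r ≤ 21, (τ r 1 = k * τ r 0 ↔ r + 1 = a)

theorem trinomialCoeff_one_eq_mul_iff {k : ZMod 23} {a b : ℕ} (ha : IsRatioDigit k a)
    (hb : IsRatioDigit (-k - 1) b) (q : ℕ) :
    τ q 1 = k * τ q 0 ↔ LastNonzeroDigit a b (q + 1) := by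
  induction q using Nat.strong_induction_on generalizing k a b with
  | _ q ih =>
  obtain ⟨p, r, hr, rfl⟩ : ∃ p r, r < 23 ∧ q = 23 * p + r :=
    ⟨q / 23, q % 23, Nat.mod_lt _ (by norm_num), (Nat.div_add_mod q 23).symm⟩
  rcases Nat.lt_or_ge r 22 with hr | hr
  · rw [trinomialCoeff_mul_add_of_add_lt (by omega), trinomialCoeff_mul_add_of_add_lt (by omega),
      mul_left_comm, mul_right_inj' (trinomialCoeff_zero_ne_zero p), ha.2.2 r (by omega),
      lastNonzeroDigit_iff_of_not_dvd ha.2.1 (by omega)]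
    omega
  · obtain rfl : r = 22 := by omega
    have h₀ : τ (23 * p + 22) 0 = -τ p 0 := by
      have hd : τ 22 0 = -1 := by rw [trinomialCoeff_eq_getD]; decide
      rw [trinomialCoeff_mul_add_of_add_lt (by norm_num), hd, mul_neg_one]
    have h₁ : τ (23 * p + 22) 1 = τ p 1 + τ p 0 := by
      have hd : τ 22 1 = 1 := by rw [trinomialCoeff_eq_getD]; decide
      have hc : ((1 + X + X ^ 2 : (ZMod 23)[X]) ^ 22).coeff 0 = 1 := by
        rw [coeff_trinomial_pow_eq_getD]; decide
      rw [trinomialCoeff_mul_add_of_le_add (by norm_num) (by norm_num) (by norm_num), hd, hc,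
        mul_one, mul_one]
    rw [show 23 * p + 22 + 1 = 23 * (p + 1) by ring,
      lastNonzeroDigit_twentythree_mul (Nat.not_dvd_of_pos_of_lt ha.1 ha.2.1),
      ← ih p (by omega) hb (by convert ha using 1; ring), h₀, h₁]
    constructor <;> intro h <;> linear_combination h

theorem trinomialCoeff_zero_eq_two_iff (n : ℕ) :
    τ n 0 = τ n 2 ↔ (n % 23 = 21 ∧ LastNonzeroDigit 21 1 (n / 23 + 1))
      ∨ (n % 23 = 22 ∧ LastNonzeroDigit 2 22 (n / 23 + 1)) := by
  obtain ⟨q, r, hr, rfl⟩ : ∃ q r, r < 23 ∧ n = 23 * q + r :=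
    ⟨n / 23, n % 23, Nat.mod_lt _ (by norm_num), (Nat.div_add_mod n 23).symm⟩
  rw [show (23 * q + r) / 23 = q by omega, show (23 * q + r) % 23 = r by omega]
  rcases (show r ≤ 20 ∨ r = 21 ∨ r = 22 by omega) with hr | rfl | rfl
  · have hdigit : ∀ r ≤ 20, τ r 0 ≠ τ r 2 := by simp only [trinomialCoeff_eq_getD]; decide
    rw [trinomialCoeff_mul_add_of_add_lt (by omega), trinomialCoeff_mul_add_of_add_lt (by omega),
      mul_right_inj' (trinomialCoeff_zero_ne_zero q)]
    simp only [hdigit r hr, false_iff]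
    omega
  · have h₀ : τ 21 0 = 8 := by rw [trinomialCoeff_eq_getD]; decide
    have h₂ : τ 21 2 = 9 := by rw [trinomialCoeff_eq_getD]; decide
    have hc : ((1 + X + X ^ 2 : (ZMod 23)[X]) ^ 21).coeff 0 = 1 := by
      rw [coeff_trinomial_pow_eq_getD]; decide
    rw [trinomialCoeff_mul_add_of_add_lt (by norm_num),
      trinomialCoeff_mul_add_of_le_add (by norm_num) (by norm_num) (by norm_num), h₀, h₂, hc,
      ← trinomialCoeff_one_eq_mul_iff (k := -1) (a := 21) (b := 1)
        (by simp only [IsRatioDigit, trinomialCoeff_eq_getD]; decide)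
        (by simp only [IsRatioDigit, trinomialCoeff_eq_getD]; decide),
      or_iff_left (by omega), and_iff_right rfl]
    constructor <;> intro h <;> linear_combination -h
  · have h₀ : τ 22 0 = -1 := by rw [trinomialCoeff_eq_getD]; decide
    have h₂ : τ 22 2 = 0 := by rw [trinomialCoeff_eq_getD]; decide
    have hc : ((1 + X + X ^ 2 : (ZMod 23)[X]) ^ 22).coeff 1 = -1 := by
      rw [coeff_trinomial_pow_eq_getD]; decide
    rw [trinomialCoeff_mul_add_of_add_lt (by norm_num),
      trinomialCoeff_mul_add_of_le_add (by norm_num) (by norm_num) (by norm_num), h₀, h₂, hc,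
      ← trinomialCoeff_one_eq_mul_iff (k := 1) (a := 2) (b := 22)
        (by simp only [IsRatioDigit, trinomialCoeff_eq_getD]; decide)
        (by simp only [IsRatioDigit, trinomialCoeff_eq_getD]; decide),
      or_iff_right (by omega), and_iff_right rfl]
    constructor <;> intro h <;> linear_combination h

end Modulo23

theorem motzkin_mod_twentythree (n : ℕ) :
    23 ∣ motzkin n ↔
      ∃ i j : ℕ, 1 ≤ j ∧
        (n + 2 = (23 * i + 21) * 23 ^ (2 * j - 1) ∨
         n + 2 = (23 * i + 1) * 23 ^ (2 * j) ∨
         n + 1 = (23 * i + 2) * 23 ^ (2 * j - 1) ∨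
         n + 1 = (23 * i + 22) * 23 ^ (2 * j)) := by
  rw [dvd_motzkin_iff, trinomialCoeff_zero_eq_two_iff,
    ← exists_add_eq_mul_pow_iff (s := 2) (by norm_num) (by norm_num),
    ← exists_add_eq_mul_pow_iff (s := 1) (by norm_num) (by norm_num)]
  simp only [← exists_or, ← and_or_left, or_assoc]
end

section
/- If the base-19 representation of n contains at least two digits belonging to the set {4, 14}, then the Motzkin number M_n is divisible by 19. -/
open Finset

/-!
The Motzkin series `M` satisfies `M = 1 + X M + X² M²`, so `G = 1 - X - 2X²M` is the square root
with constant term `1` of the discriminant `f = 1 - 2X - 3X²`. Over `𝔽_p`, `p` odd, another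
square root of `f` is `f T`, where `T = ∑ tₙ Xⁿ` and `tₙ` is the product of the coefficients of
`g = f^((p-1)/2)` indexed by the base-`p` digits of `n`: since `deg g < p`, `T = g · T(X^p)`,
hence `f T²` is invariant under `X ↦ X^p` (because `f g² = f^p = f(X^p)`) and so equals `1`.
Comparing coefficients of `G = f T` gives `-2 Mₙ = t_{n+2} - 2 t_{n+1} - 3 tₙ` in `𝔽_p`.
For `p = 19` the coefficients of `g` at `4` and `14` vanish, and two such digits in `n` leave at
least one in each of `n`, `n + 1`, `n + 2`.
-/

open PowerSeries
open scoped Polynomial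

theorem Nat.sum_antidiagonal_choose_mul_choose (n r s : ℕ) :
    ∑ ij ∈ antidiagonal n, ij.1.choose r * ij.2.choose s = (n + 1).choose (r + s + 1) := by
  induction n generalizing s with
  | zero => cases r <;> cases s <;> simp [Nat.choose_eq_zero_of_lt]
  | succ n ih =>
    rw [Nat.sum_antidiagonal_succ']
    cases s with
    | zero =>
      have hockey := ih 0
      simp only [Nat.choose_zero_right, mul_one, add_zero] at hockey ⊢
      rw [hockey, Nat.choose_succ_succ' (n + 1)]
    | succ s =>
      simp only [Nat.choose_succ_succ' _ s, mul_add, sum_add_distrib, ih, Nat.choose_zero_succ,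
        mul_zero, zero_add]
      rw [Nat.choose_succ_succ' (n + 1), ← add_assoc]

theorem motzkin_eq_sum_range {k m : ℕ} (hk : k ≤ m) :
    motzkin k = ∑ a ∈ range (m + 1), k.choose (2 * a) * catalan a := by
  refine sum_subset (range_subset_range.2 (by omega)) fun a _ ha => ?_
  rw [mem_range, not_lt] at ha
  rw [Nat.choose_eq_zero_of_lt (by omega), zero_mul]

theorem sum_range_sum_range_mul_catalan_mul_catalan {N : ℕ} (f : ℕ → ℕ)
    (hf : ∀ c, N ≤ c → f c = 0) :
    ∑ a ∈ range N, ∑ b ∈ range N, f (a + b) * (catalan a * catalan b)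
      = ∑ c ∈ range N, f c * catalan (c + 1) := by
  have truncate (a : ℕ) (ha : a ∈ range N) :
      ∑ b ∈ range N, f (a + b) * (catalan a * catalan b)
        = ∑ b ∈ range (N - a), f (a + b) * (catalan a * catalan b) := by
    refine (sum_subset (range_subset_range.2 (by omega)) fun b _ hb => ?_).symm
    rw [mem_range, not_lt] at hb
    rw [hf _ (by omega), zero_mul]
  rw [sum_congr rfl truncate,
    ← sum_range_diag_flip N fun a b => f (a + b) * (catalan a * catalan b)]
  refine sum_congr rfl fun c _ => ?_
  rw [catalan_succ', Nat.sum_antidiagonal_eq_sum_range_succ_mk, mul_sum]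
  refine sum_congr rfl fun a ha => ?_
  rw [Nat.add_sub_cancel' (Nat.le_of_lt_succ (mem_range.1 ha))]

theorem sum_antidiagonal_motzkin_mul_motzkin (n : ℕ) :
    ∑ ij ∈ antidiagonal n, motzkin ij.1 * motzkin ij.2
      = ∑ c ∈ range (n + 1), (n + 1).choose (2 * c + 1) * catalan (c + 1) :=
  calc ∑ ij ∈ antidiagonal n, motzkin ij.1 * motzkin ij.2
      = ∑ ij ∈ antidiagonal n, ∑ a ∈ range (n + 1), ∑ b ∈ range (n + 1),
          ij.1.choose (2 * a) * ij.2.choose (2 * b) * (catalan a * catalan b) := by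
        refine sum_congr rfl fun ij hij => ?_
        have := mem_antidiagonal.1 hij
        rw [motzkin_eq_sum_range (m := n) (by omega), motzkin_eq_sum_range (m := n) (by omega),
          sum_mul_sum]
        exact sum_congr rfl fun _ _ => sum_congr rfl fun _ _ => by ring
    _ = ∑ a ∈ range (n + 1), ∑ b ∈ range (n + 1),
          (n + 1).choose (2 * (a + b) + 1) * (catalan a * catalan b) := by
        rw [sum_comm]
        refine sum_congr rfl fun a _ => ?_
        rw [sum_comm]
        refine sum_congr rfl fun b _ => ?_
        rw [← sum_mul, Nat.sum_antidiagonal_choose_mul_choose, mul_add]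
    _ = _ := sum_range_sum_range_mul_catalan_mul_catalan (fun c => (n + 1).choose (2 * c + 1))
        fun _ _ => Nat.choose_eq_zero_of_lt (by omega)

theorem motzkin_add_two (n : ℕ) :
    motzkin (n + 2) = motzkin (n + 1) + ∑ ij ∈ antidiagonal n, motzkin ij.1 * motzkin ij.2 := by
  have pascal (c : ℕ) : (n + 2).choose (2 * (c + 1))
      = (n + 1).choose (2 * (c + 1)) + (n + 1).choose (2 * c + 1) := by
    rw [show 2 * (c + 1) = 2 * c + 1 + 1 by ring, Nat.choose_succ_succ', add_comm]
  rw [sum_antidiagonal_motzkin_mul_motzkin, motzkin_eq_sum_range (Nat.le_succ (n + 1)), motzkin,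
    sum_range_succ' _ (n + 2), sum_range_succ' _ (n + 2)]
  simp only [pascal, add_mul, sum_add_distrib]
  rw [sum_range_succ (fun c => (n + 1).choose (2 * c + 1) * catalan (c + 1)) (n + 1),
    Nat.choose_eq_zero_of_lt (by omega), zero_mul, add_zero, Nat.choose_zero_right,
    Nat.choose_zero_right]
  ring

section MotzkinSeries

variable (R : Type*) [CommRing R]

noncomputable def motzkinSeries : PowerSeries R := mk fun n => (motzkin n : R)

theorem motzkinSeries_eq :
    motzkinSeries R = 1 + X * motzkinSeries R + X ^ 2 * motzkinSeries R ^ 2 := by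
  ext (_ | _ | n)
  · simp [motzkinSeries, motzkin]
  · simp [motzkinSeries, motzkin, coeff_X_pow_mul', sum_range_succ]
  · rw [map_add, map_add, coeff_succ_X_mul, coeff_X_pow_mul', if_pos (by omega),
      show n + 1 + 1 - 2 = n by omega, pow_two, coeff_mul]
    simp [motzkinSeries, motzkin_add_two]

noncomputable def motzkinDiscriminant : R[X] := 1 - 2 * Polynomial.X - 3 * Polynomial.X ^ 2

theorem coe_motzkinDiscriminant :
    (motzkinDiscriminant R : PowerSeries R) = 1 - 2 * X - 3 * X ^ 2 := by
  change Polynomial.coeToPowerSeries.ringHom (motzkinDiscriminant R) = _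
  simp only [motzkinDiscriminant, map_sub, map_mul, map_pow, map_one, map_ofNat,
    Polynomial.coeToPowerSeries.ringHom_apply, Polynomial.coe_X]

theorem motzkinDiscriminant_eq_mul :
    motzkinDiscriminant R = (1 + Polynomial.X) * (1 + Polynomial.C (-3) * Polynomial.X) := by
  rw [motzkinDiscriminant, map_neg, map_ofNat]
  ring

theorem natDegree_motzkinDiscriminant_le : (motzkinDiscriminant R).natDegree ≤ 2 := by
  unfold motzkinDiscriminant
  compute_degree

theorem coeff_zero_motzkinDiscriminant : (motzkinDiscriminant R).coeff 0 = 1 := by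
  simp [motzkinDiscriminant]

theorem sq_one_sub_X_sub_two_mul_X_sq_mul_motzkinSeries :
    (1 - X - 2 * X ^ 2 * motzkinSeries R) ^ 2 = (motzkinDiscriminant R : PowerSeries R) := by
  rw [coe_motzkinDiscriminant]
  linear_combination (-4 * X ^ 2 : PowerSeries R) * motzkinSeries_eq R

variable {R}

theorem coeff_one_sub_X_sub_two_mul_X_sq_mul_motzkinSeries (n : ℕ) :
    coeff (n + 2) (1 - X - 2 * X ^ 2 * motzkinSeries R) = -2 * (motzkin n : R) := by
  simp [motzkinSeries, ← map_ofNat (C (R := R)) 2, mul_assoc, coeff_X_pow_mul', coeff_X]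

theorem coeff_motzkinDiscriminant_mul (T : PowerSeries R) (n : ℕ) :
    coeff (n + 2) ((motzkinDiscriminant R : PowerSeries R) * T)
      = coeff (n + 2) T - 2 * coeff (n + 1) T - 3 * coeff n T := by
  simp [coe_motzkinDiscriminant, ← map_ofNat (C (R := R)), sub_mul, mul_assoc, coeff_X_pow_mul',
    coeff_succ_X_mul]

end MotzkinSeries

def digitProd {M : Type*} [CommMonoid M] (b : ℕ) (r : ℕ → M) (n : ℕ) : M :=
  ((Nat.digits b n).map r).prod

section DigitProd

variable {M : Type*} {b : ℕ}

theorem digitProd_add_mul [CommMonoid M] {r : ℕ → M} (hb : 1 < b) (hr : r 0 = 1) {d : ℕ}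
    (hd : d < b) (a : ℕ) : digitProd b r (d + b * a) = r d * digitProd b r a := by
  by_cases hda : d = 0 ∧ a = 0
  · simp [hda, digitProd, hr]
  · rw [digitProd, Nat.digits_add b hb d a hd (by omega), List.map_cons, List.prod_cons,
      digitProd]

theorem digitProd_eq_zero [CommMonoidWithZero M] {r : ℕ → M} {d n : ℕ}
    (hd : d ∈ Nat.digits b n) (hr : r d = 0) : digitProd b r n = 0 :=
  List.prod_eq_zero (hr ▸ List.mem_map_of_mem hd)

end DigitProd

section DigitCount

variable {b : ℕ} {q : ℕ → Bool}

theorem countP_digits_add_mul (hb : 1 < b) (hq0 : q 0 = false) {d : ℕ} (hd : d < b) (a : ℕ) :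
    (Nat.digits b (d + b * a)).countP q = (Nat.digits b a).countP q + if q d then 1 else 0 := by
  by_cases hda : d = 0 ∧ a = 0
  · simp [hda, hq0]
  · rw [Nat.digits_add b hb d a hd (by omega), List.countP_cons]

/-- Adding one turns trailing digits `b - 1` into `0` and raises a single digit. -/
theorem countP_digits_le_countP_digits_succ_add_one (hb : 1 < b) (hq0 : q 0 = false)
    (hqb : q (b - 1) = false) (n : ℕ) :
    (Nat.digits b n).countP q ≤ (Nat.digits b (n + 1)).countP q + 1 := by
  induction n using Nat.strong_induction_on with
  | _ n ih =>
    obtain ⟨d, a, hd, rfl⟩ : ∃ d a, d < b ∧ d + b * a = n :=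
      ⟨n % b, n / b, Nat.mod_lt n (by omega), Nat.mod_add_div n b⟩
    rcases Nat.lt_or_ge (d + 1) b with hd1 | hd1
    · rw [countP_digits_add_mul hb hq0 hd, add_right_comm,
        countP_digits_add_mul hb hq0 hd1]
      split_ifs <;> omega
    · have ha : a < d + b * a := by
        have := Nat.le_mul_of_pos_left a (by omega : 0 < b)
        omega
      have hcarry : d + b * a + 1 = 0 + b * (a + 1) := by rw [mul_add]; omega
      rw [hcarry, countP_digits_add_mul hb hq0 hd, countP_digits_add_mul hb hq0 (by omega), hq0,
        show d = b - 1 by omega, hqb]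
      simpa using ih a ha

theorem countP_digits_add_pos (hb : 1 < b) (hq0 : q 0 = false) (hqb1 : q (b - 1) = false)
    (hqb2 : q (b - 2) = false) {n : ℕ} (hn : 2 ≤ (Nat.digits b n).countP q) {k : ℕ}
    (hk : k ≤ 2) : 0 < (Nat.digits b (n + k)).countP q := by
  have step := countP_digits_le_countP_digits_succ_add_one hb hq0 hqb1
  obtain rfl | rfl | rfl : k = 0 ∨ k = 1 ∨ k = 2 := by omega
  · simpa using (by omega : 0 < (Nat.digits b n).countP q)
  · have := step n; omega
  rw [show n + 2 = n + 1 + 1 from rfl]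
  obtain ⟨d, a, hd, rfl⟩ : ∃ d a, d < b ∧ d + b * a = n :=
    ⟨n % b, n / b, Nat.mod_lt n (by omega), Nat.mod_add_div n b⟩
  rw [countP_digits_add_mul hb hq0 hd] at hn
  rcases Nat.lt_or_ge (d + 2) b with hd2 | hd2
  · rw [show d + b * a + 1 + 1 = d + 2 + b * a by omega, countP_digits_add_mul hb hq0 hd2]
    split_ifs at hn ⊢ <;> omega
  rcases Nat.lt_or_ge (d + 1) b with hd1 | hd1
  · have hsucc : (Nat.digits b (d + b * a + 1)).countP q = (Nat.digits b a).countP q := by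
      rw [add_right_comm, countP_digits_add_mul hb hq0 hd1]
      simp [show d + 1 = b - 1 by omega, hqb1]
    simp only [show d = b - 2 by omega, hqb2, Bool.false_eq_true, if_false, add_zero] at hn
    have := step (d + b * a + 1)
    omega
  · have hcarry : d + b * a + 1 + 1 = 1 + b * (a + 1) := by rw [mul_add]; omega
    simp only [show d = b - 1 by omega, hqb1, Bool.false_eq_true, if_false, add_zero] at hn
    have := step a
    rw [hcarry, countP_digits_add_mul hb hq0 hb]
    omega

end DigitCount

section PowerSeriesLemmas

variable {R : Type*} [CommRing R] {p : ℕ}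

theorem PowerSeries.expand_coe (hp : p ≠ 0) (f : R[X]) :
    expand p hp (f : PowerSeries R) = (Polynomial.expand R p f : PowerSeries R) := by
  ext n
  simp [coeff_expand, Polynomial.coeff_expand (Nat.pos_of_ne_zero hp)]

theorem PowerSeries.eq_C_of_expand_eq_self (hp : 1 < p) {φ : PowerSeries R}
    (h : expand p (by omega) φ = φ) : φ = C (constantCoeff φ) := by
  ext n
  induction n using Nat.strong_induction_on with
  | _ n ih =>
    rcases Nat.eq_zero_or_pos n with rfl | hn
    · simp
    rw [coeff_C, if_neg hn.ne', ← h, coeff_expand]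
    split_ifs with hdvd
    · have hpos : 0 < n / p := Nat.div_pos (Nat.le_of_dvd hn hdvd) (by omega)
      rw [ih _ (Nat.div_lt_self hn hp), coeff_C, if_neg hpos.ne']
    · rfl

theorem mk_digitProd_eq_mul_expand (hp : 1 < p) {g : R[X]} (hg : g.natDegree < p)
    (hg0 : g.coeff 0 = 1) :
    mk (digitProd p g.coeff) = g * expand p (by omega) (mk (digitProd p g.coeff)) := by
  ext n
  rw [coeff_mul, sum_eq_single (n % p, p * (n / p))]
  · rw [Polynomial.coeff_coe, coeff_expand_mul, coeff_mk, coeff_mk,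
      ← digitProd_add_mul hp hg0 (Nat.mod_lt n (by omega)), Nat.mod_add_div]
  · rintro ⟨i, j⟩ hij hne
    rw [HasAntidiagonal.mem_antidiagonal] at hij
    by_cases hdvd : p ∣ j
    · obtain ⟨c, rfl⟩ := hdvd
      have hi : p ≤ i := by
        by_contra! hi
        apply hne
        rw [← hij, Nat.add_mul_mod_self_left, Nat.mod_eq_of_lt hi,
          Nat.add_mul_div_left _ _ (by omega), Nat.div_eq_of_lt hi, zero_add]
      rw [Polynomial.coeff_coe, Polynomial.coeff_eq_zero_of_natDegree_lt (by omega), zero_mul]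
    · rw [coeff_expand_of_not_dvd _ _ _ hdvd, mul_zero]
  · exact fun h => absurd (HasAntidiagonal.mem_antidiagonal.2 (Nat.mod_add_div n p)) h

theorem PowerSeries.eq_of_sq_eq_sq_of_constantCoeff_eq [IsDomain R] (h2 : (2 : R) ≠ 0)
    {φ ψ : PowerSeries R} (h : φ ^ 2 = ψ ^ 2) (hc : constantCoeff φ = constantCoeff ψ)
    (hψ : constantCoeff ψ ≠ 0) : φ = ψ := by
  refine (sq_eq_sq_iff_eq_or_eq_neg.1 h).resolve_right fun hneg => ?_
  rw [hneg, map_neg, neg_eq_iff_add_eq_zero, ← two_mul] at hc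
  exact mul_ne_zero h2 hψ hc

end PowerSeriesLemmas

theorem Polynomial.coeff_one_add_C_mul_X_pow {R : Type*} [CommRing R] (c : R) (n k : ℕ) :
    ((1 + C c * X) ^ n).coeff k = c ^ k * n.choose k := by
  have term (m : ℕ) : ((C c * X) ^ m * 1 ^ (n - m) * (n.choose m : R[X])).coeff k
      = if k = m then c ^ m * n.choose m else 0 := by
    rw [one_pow, mul_one, mul_pow, ← C_pow, ← C_eq_natCast, mul_right_comm, ← C_mul,
      coeff_C_mul_X_pow]
  rw [add_comm, add_pow, finsetSum_coeff, sum_congr rfl fun m _ => term m, sum_ite_eq]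
  split_ifs with hk
  · rfl
  · rw [mem_range, not_lt] at hk
    rw [Nat.choose_eq_zero_of_lt hk, Nat.cast_zero, mul_zero]

section OddPrime

variable {p : ℕ} [Fact p.Prime]

theorem mul_mk_digitProd_sq_eq_one (hp : p ≠ 2) {f : (ZMod p)[X]} (hf : f.natDegree ≤ 2)
    (hf0 : f.coeff 0 = 1) :
    (f : PowerSeries (ZMod p)) * mk (digitProd p (f ^ (p / 2)).coeff) ^ 2 = 1 := by
  have hp1 : 1 < p := (Fact.out : p.Prime).one_lt
  have hodd : 2 * (p / 2) + 1 = p :=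
    Nat.two_mul_div_two_add_one_of_odd ((Fact.out : p.Prime).odd_of_ne_two hp)
  have hfrob : f ^ p = f * (f ^ (p / 2)) ^ 2 := by
    rw [← pow_mul, ← pow_succ', mul_comm, hodd]
  set g := f ^ (p / 2)
  have hg : g.natDegree < p := Polynomial.natDegree_pow_le.trans_lt (by nlinarith)
  have hg0 : g.coeff 0 = 1 := by
    rw [Polynomial.coeff_zero_eq_eval_zero, Polynomial.eval_pow,
      ← Polynomial.coeff_zero_eq_eval_zero, hf0, one_pow]
  set T := mk (digitProd p g.coeff)
  set U := (f : PowerSeries (ZMod p)) * T ^ 2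
  have hfix : expand p (by omega) U = U :=
    calc expand p _ U
        = (Polynomial.expand (ZMod p) p f : PowerSeries (ZMod p)) * expand p (by omega) T ^ 2 := by
          rw [map_mul, map_pow, expand_coe]
      _ = f * (g * expand p (by omega) T) ^ 2 := by
          rw [ZMod.expand_card, hfrob]
          push_cast
          ring
      _ = U := by rw [← mk_digitProd_eq_mul_expand hp1 hg hg0]
  rw [eq_C_of_expand_eq_self hp1 hfix]
  simp [U, T, hf0, digitProd]

theorem one_sub_X_sub_two_mul_X_sq_mul_motzkinSeries_eq_mul_mk_digitProd (hp : p ≠ 2) :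
    1 - X - 2 * X ^ 2 * motzkinSeries (ZMod p)
      = (motzkinDiscriminant (ZMod p) : PowerSeries (ZMod p))
        * PowerSeries.mk (digitProd p (motzkinDiscriminant (ZMod p) ^ (p / 2)).coeff) := by
  have hsq := mul_mk_digitProd_sq_eq_one hp (natDegree_motzkinDiscriminant_le _)
    (coeff_zero_motzkinDiscriminant _)
  refine eq_of_sq_eq_sq_of_constantCoeff_eq (Ring.two_ne_zero (by rwa [ZMod.ringChar_zmod_n])) ?_
    ?_ ?_
  · rw [sq_one_sub_X_sub_two_mul_X_sq_mul_motzkinSeries, mul_pow, sq, mul_assoc, hsq, mul_one]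
  · simp [coeff_zero_motzkinDiscriminant, digitProd]
  · simp [coeff_zero_motzkinDiscriminant, digitProd]

theorem neg_two_mul_motzkin_eq_digitProd (hp : p ≠ 2) (n : ℕ) :
    -2 * (motzkin n : ZMod p)
      = digitProd p (motzkinDiscriminant (ZMod p) ^ (p / 2)).coeff (n + 2)
        - 2 * digitProd p (motzkinDiscriminant (ZMod p) ^ (p / 2)).coeff (n + 1)
        - 3 * digitProd p (motzkinDiscriminant (ZMod p) ^ (p / 2)).coeff n := by
  have h := congrArg (coeff (n + 2))
    (one_sub_X_sub_two_mul_X_sq_mul_motzkinSeries_eq_mul_mk_digitProd hp)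
  rwa [coeff_one_sub_X_sub_two_mul_X_sq_mul_motzkinSeries, coeff_motzkinDiscriminant_mul,
    coeff_mk, coeff_mk, coeff_mk] at h

end OddPrime

theorem coeff_motzkinDiscriminant_pow_nine_eq_zero {d : ℕ} (hd : d = 4 ∨ d = 14) :
    (motzkinDiscriminant (ZMod 19) ^ 9).coeff d = 0 := by
  rw [motzkinDiscriminant_eq_mul, mul_pow, Polynomial.coeff_mul,
    Nat.sum_antidiagonal_eq_sum_range_succ_mk]
  simp only [Polynomial.coeff_one_add_X_pow, Polynomial.coeff_one_add_C_mul_X_pow]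
  rcases hd with rfl | rfl <;> decide

instance Nat.fact_prime_nineteen : Fact (Nat.Prime 19) := ⟨by norm_num⟩

theorem motzkin_two_special_base19 (n : ℕ)
    (h : 2 ≤ (Nat.digits 19 n).countP (fun d => decide (d = 4 ∨ d = 14))) :
    19 ∣ motzkin n := by
  set t := digitProd 19 (motzkinDiscriminant (ZMod 19) ^ (19 / 2)).coeff
  have vanish (k : ℕ) (hk : k ≤ 2) : t (n + k) = 0 := by
    obtain ⟨d, hd, hspecial⟩ :=
      List.countP_pos_iff.1 (countP_digits_add_pos (by norm_num) rfl rfl rfl h hk)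
    exact digitProd_eq_zero hd
      (coeff_motzkinDiscriminant_pow_nine_eq_zero (by simpa using hspecial))
  have hrec : -2 * (motzkin n : ZMod 19) = t (n + 2) - 2 * t (n + 1) - 3 * t n :=
    neg_two_mul_motzkin_eq_digitProd (by norm_num) n
  rw [vanish 2 le_rfl, vanish 1 one_le_two, show t n = 0 from vanish 0 zero_le_two] at hrec
  have hM : (motzkin n : ZMod 19) = 0 :=
    (mul_eq_zero.1 (hrec.trans (by ring))).resolve_left (by decide : (-2 : ZMod 19) ≠ 0)
  exact (ZMod.natCast_eq_zero_iff _ _).1 hM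
end
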